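/- arXiv:1201.2376 — 5 statements merged into one kernel-verified Lean document; each statement's English description precedes it below -/
import Mathlib

section
/- Let n>2 be an integer. There exists s>0 such that for every r∈(0,1/32) there exists δ>0 with the following property: for every f∈Γ_n(ℝ^{n+1}) with ‖f−p‖_{C^1}<δ there exists a C^1 function g:B(c,s)→ℝ with sup_{B(c,s)}|g|≤r and sup_{B(c,s)}|∂g/∂x_i|≤r for i=1,…,n, such that f([0,1]^n)∩(B(c,s)×ℝ)={(x,g(x)) : x∈B(c,s)}. -/
open Set Metric MeasureTheory

noncomputable section

abbrev Euc (m : ℕ) : Type := EuclideanSpace ℝ (Fin m)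

/-- The unit cube `[0,1]^n` in `ℝ^n`. -/
def unitCube (n : ℕ) : Set (Euc n) := {x | ∀ i, x i ∈ Set.Icc (0:ℝ) 1}

/-- The space `Γ_n(X)` of `C^1` surfaces of dimension `n` in `X`. -/
structure GammaN (n : ℕ) (X : Type*) [NormedAddCommGroup X] [NormedSpace ℝ X] where
  toFun : Euc n → X
  contDiff : ContDiff ℝ 1 toFun

/-- The `C^1` norm: max of the sup norm on the cube and the sup norms of the partial
derivatives on the cube. -/
def cNorm {n : ℕ} {X : Type*} [NormedAddCommGroup X] [NormedSpace ℝ X] (f : Euc n → X) : ℝ :=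
  max (⨆ x : unitCube n, ‖f x.1‖)
      (⨆ i : Fin n, ⨆ x : unitCube n, ‖fderiv ℝ f x.1 (EuclideanSpace.single i 1)‖)

/-- Topology on `Γ_n(X)` generated by the `C^1`-norm balls. -/
instance GammaN.topologicalSpace (n : ℕ) (X : Type*) [NormedAddCommGroup X]
    [NormedSpace ℝ X] : TopologicalSpace (GammaN n X) :=
  TopologicalSpace.generateFrom
    {U | ∃ (f : GammaN n X) (ε : ℝ), 0 < ε ∧ U = {g | cNorm (g.toFun - f.toFun) < ε}}

/-- `N ⊆ X` is `Γ_n`-null if for residually many `f ∈ Γ_n(X)` the image of the unit cube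
meets `N` in `n`-dimensional Hausdorff measure zero. -/
def GammaNull (n : ℕ) (X : Type*) [NormedAddCommGroup X] [NormedSpace ℝ X]
    [MeasurableSpace X] [BorelSpace X] (N : Set X) : Prop :=
  IsMeagre {f : GammaN n X | μH[(n:ℝ)] (f.toFun '' unitCube n ∩ N) ≠ 0}

/-- A set is directionally porous if there is `0 < ρ < 1` so that every `x ∈ P` admits a unit
direction `v` with holes `B(x + t v, ρ |t|)` for arbitrarily small `t`. -/
def DirPorous {X : Type*} [NormedAddCommGroup X] [NormedSpace ℝ X] (P : Set X) : Prop :=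
  ∃ ρ : ℝ, 0 < ρ ∧ ρ < 1 ∧ ∀ x ∈ P, ∃ v : X, ‖v‖ = 1 ∧ ∀ δ : ℝ, 0 < δ →
    ∃ t : ℝ, t ≠ 0 ∧ |t| < δ ∧ Metric.ball (x + t • v) (ρ * |t|) ∩ P = ∅

/-- A set is porous if there is `0 < ρ < 1` so that every `x ∈ P` has holes
`B(y, ρ ‖y - x‖)` with `y` arbitrarily close to `x`. -/
def Porous {X : Type*} [NormedAddCommGroup X] (P : Set X) : Prop :=
  ∃ ρ : ℝ, 0 < ρ ∧ ρ < 1 ∧ ∀ x ∈ P, ∀ δ : ℝ, 0 < δ →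
    ∃ y : X, y ≠ x ∧ ‖y - x‖ < δ ∧ Metric.ball y (ρ * ‖y - x‖) ∩ P = ∅

/-- A countable union of directionally porous sets. -/
def SigmaDirPorous {X : Type*} [NormedAddCommGroup X] [NormedSpace ℝ X] (Q : Set X) : Prop :=
  ∃ P : ℕ → Set X, (∀ k, DirPorous (P k)) ∧ Q = ⋃ k, P k

/-- The point `(x, y) ∈ ℝ^{n+1}` over `x ∈ ℝ^n`. -/
def graphPt (n : ℕ) (x : Euc n) (y : ℝ) : Euc (n + 1) :=
  (EuclideanSpace.equiv (Fin (n + 1)) ℝ).symm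
    (fun i => if h : (i : ℕ) < n then x ⟨(i : ℕ), h⟩ else y)

theorem graphPt_contDiff (n : ℕ) : ContDiff ℝ 1 (fun x : Euc n => graphPt n x 0) := by
  have h1 : ContDiff ℝ 1 (fun x : Euc n =>
      (fun i : Fin (n + 1) => if h : (i : ℕ) < n then x ⟨(i : ℕ), h⟩ else (0 : ℝ))) := by
    apply contDiff_pi.2
    intro i
    by_cases h : (i : ℕ) < n
    · simp only [dif_pos h]
      exact (EuclideanSpace.proj (𝕜 := ℝ) (⟨(i : ℕ), h⟩ : Fin n)).contDiff
    · simp only [dif_neg h]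
      exact contDiff_const
  exact ((EuclideanSpace.equiv (Fin (n + 1)) ℝ).symm :
    (Fin (n + 1) → ℝ) ≃L[ℝ] Euc (n + 1)).contDiff.comp h1

/-- The centre `c = (1/2, …, 1/2)` of the unit cube in `ℝ^n`. -/
def cCenter (n : ℕ) : Euc n := (EuclideanSpace.equiv (Fin n) ℝ).symm (fun _ => (1 : ℝ) / 2)

/-- Projection of `ℝ^{n+1}` onto the first `n` coordinates. -/
def projE (n : ℕ) (z : Euc (n + 1)) : Euc n :=
  (EuclideanSpace.equiv (Fin n) ℝ).symm (fun i => z i.castSucc)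

/-- The cylinder `B(c, s) × ℝ ⊆ ℝ^{n+1}`. -/
def cylinder (n : ℕ) (s : ℝ) : Set (Euc (n + 1)) := {z | projE n z ∈ Metric.ball (cCenter n) s}

/-- The flat surface `p(x) = (x, 0)` as an element of `Γ_n(ℝ^{n+1})`. -/
def pFlat (n : ℕ) : GammaN n (Euc (n + 1)) where
  toFun x := graphPt n x 0
  contDiff := graphPt_contDiff n

/-! Write `f = p + h` with `h` small in `C¹` on the cube. The horizontal part
`F x = x + π (h x)` of `f`, with `π : ℝⁿ⁺¹ → ℝⁿ` the projection, is then a `C¹`-small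
perturbation of the identity, so the quantitative inverse function theorem makes it a
homeomorphism of `B(c, 1/2)` onto an open set containing `B(c, 1/8)`, with a `C¹` inverse whose
derivative has norm at most `(1 - ε)⁻¹`. Over `B(c, 1/8)` the surface is the graph of
`g = h_{n+1} ∘ F⁻¹`, and no other point of the cube lies over that ball because `F` moves points
by at most `‖h‖_∞`. -/

open scoped NNReal

section NearIdentity

variable {E : Type*} [NormedAddCommGroup E] [NormedSpace ℝ E]

theorem ContinuousLinearMap.exists_continuousLinearEquiv_coe_eq [CompleteSpace E]
    {A : E →L[ℝ] E} (hA : ‖A - ContinuousLinearMap.id ℝ E‖ < 1) :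
    ∃ e : E ≃L[ℝ] E, (e : E →L[ℝ] E) = A := by
  obtain ⟨u, rfl⟩ : IsUnit A := by
    by_contra hA'
    exact nonunits.subset_compl_ball hA' (mem_ball_iff_norm.2 hA)
  exact ⟨ContinuousLinearEquiv.unitsEquiv ℝ E u, rfl⟩

theorem ContinuousLinearEquiv.norm_symm_le_of_norm_sub_id_le (e : E ≃L[ℝ] E) {ε : ℝ}
    (hε : ε < 1) (he : ‖(e : E →L[ℝ] E) - ContinuousLinearMap.id ℝ E‖ ≤ ε) :
    ‖(e.symm : E →L[ℝ] E)‖ ≤ (1 - ε)⁻¹ := by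
  refine ContinuousLinearMap.opNorm_le_bound _ (inv_nonneg.2 (by linarith)) fun v => ?_
  set w := e.symm v
  have hw : ‖w‖ ≤ ‖v‖ + ε * ‖w‖ := calc
    ‖w‖ = ‖v - ((e : E →L[ℝ] E) - ContinuousLinearMap.id ℝ E) w‖ := by simp [w]
    _ ≤ ‖v‖ + ‖((e : E →L[ℝ] E) - ContinuousLinearMap.id ℝ E) w‖ := norm_sub_le _ _
    _ ≤ ‖v‖ + ε * ‖w‖ := by gcongr; exact ContinuousLinearMap.le_of_opNorm_le _ he w
  rw [inv_mul_eq_div, le_div_iff₀ (by linarith)]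
  change ‖w‖ * (1 - ε) ≤ ‖v‖
  linarith

theorem exists_hasFDerivAt_id_add [CompleteSpace E] {φ : E → E} {z : E}
    (hφ : DifferentiableAt ℝ φ z) {ε : ℝ} (hε : ε < 1) (hDφ : ‖fderiv ℝ φ z‖ ≤ ε) :
    ∃ e : E ≃L[ℝ] E, HasFDerivAt (fun x => x + φ x) (e : E →L[ℝ] E) z ∧
      ‖(e.symm : E →L[ℝ] E)‖ ≤ (1 - ε)⁻¹ := by
  have hD := (hasFDerivAt_id z).add hφ.hasFDerivAt
  have hsub : ‖ContinuousLinearMap.id ℝ E + fderiv ℝ φ z - ContinuousLinearMap.id ℝ E‖ ≤ ε := by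
    rwa [add_sub_cancel_left]
  obtain ⟨e, he⟩ := ContinuousLinearMap.exists_continuousLinearEquiv_coe_eq (hsub.trans_lt hε)
  exact ⟨e, he ▸ hD, e.norm_symm_le_of_norm_sub_id_le hε (he ▸ hsub)⟩

theorem approximatesLinearOn_id_add {φ : E → E} {s : Set E} {ε : ℝ≥0} (hs : Convex ℝ s)
    (hφ : ∀ x ∈ s, DifferentiableAt ℝ φ x) (hDφ : ∀ x ∈ s, ‖fderiv ℝ φ x‖ ≤ ε) :
    ApproximatesLinearOn (fun x => x + φ x)
      ((ContinuousLinearEquiv.refl ℝ E : E ≃L[ℝ] E) : E →L[ℝ] E) s ε := by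
  intro x hx y hy
  convert hs.norm_image_sub_le_of_norm_fderiv_le hφ hDφ hy hx using 2
  simp only [ContinuousLinearEquiv.coe_refl, ContinuousLinearMap.id_apply]
  abel

theorem exists_openPartialHomeomorph_id_add [CompleteSpace E] {φ : E → E} {c : E} {R ε : ℝ}
    (hφ : ∀ x ∈ ball c R, DifferentiableAt ℝ φ x) (hDφ : ∀ x ∈ ball c R, ‖fderiv ℝ φ x‖ ≤ ε)
    (hε0 : 0 ≤ ε) (hε1 : ε < 1) :
    ∃ Φ : OpenPartialHomeomorph E E, (⇑Φ = fun x => x + φ x) ∧ Φ.source = ball c R ∧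
      ∀ R', 0 ≤ R' → R' < R → closedBall (c + φ c) ((1 - ε) * R') ⊆ Φ.target := by
  lift ε to ℝ≥0 using hε0
  have hA := approximatesLinearOn_id_add (convex_ball c R) hφ hDφ
  have hnorm : Subsingleton E ∨
      ‖((ContinuousLinearEquiv.refl ℝ E).symm : E →L[ℝ] E)‖₊ = 1 := by
    rcases subsingleton_or_nontrivial E with hE | hE
    · exact Or.inl hE
    · right
      rw [ContinuousLinearEquiv.refl_symm, ContinuousLinearEquiv.coe_refl, ← NNReal.coe_inj]
      exact ContinuousLinearMap.norm_id
  have hc : Subsingleton E ∨ ε < ‖((ContinuousLinearEquiv.refl ℝ E).symm : E →L[ℝ] E)‖₊⁻¹ :=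
    hnorm.imp id fun h => by rw [h, inv_one, ← NNReal.coe_lt_coe]; exact hε1
  refine ⟨hA.toOpenPartialHomeomorph _ _ hc isOpen_ball, rfl, rfl, fun R' hR'0 hR' => ?_⟩
  rcases hnorm with hE | hnorm
  · intro y _
    rw [Subsingleton.elim y (c + φ c)]
    exact ⟨c, mem_ball_self (hR'0.trans_lt hR'), rfl⟩
  · have := hA.closedBall_subset_target hc isOpen_ball hR'0 (closedBall_subset_ball hR')
    rwa [hnorm, inv_one, NNReal.coe_one] at this

namespace OpenPartialHomeomorph

variable [CompleteSpace E] {Φ : OpenPartialHomeomorph E E} {φ : E → E} {x : E}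

theorem contDiffAt_symm_of_eq_id_add (hΦ : ⇑Φ = fun x => x + φ x) (hx : x ∈ Φ.target)
    {k : WithTop ℕ∞} (hk : k ≠ 0) (hφ : ContDiffAt ℝ k φ (Φ.symm x))
    (hDφ : ‖fderiv ℝ φ (Φ.symm x)‖ < 1) : ContDiffAt ℝ k Φ.symm x := by
  obtain ⟨e, he, -⟩ := exists_hasFDerivAt_id_add (hφ.differentiableAt hk) hDφ le_rfl
  exact Φ.contDiffAt_symm hx (hΦ ▸ he) (hΦ ▸ contDiffAt_id.add hφ)

theorem norm_fderiv_comp_symm_le_of_eq_id_add (hΦ : ⇑Φ = fun x => x + φ x) (hx : x ∈ Φ.target)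
    (hφ : DifferentiableAt ℝ φ (Φ.symm x)) {ε : ℝ} (hε : ε < 1)
    (hDφ : ‖fderiv ℝ φ (Φ.symm x)‖ ≤ ε) {G : Type*} [NormedAddCommGroup G] [NormedSpace ℝ G]
    {ψ : E → G} (hψ : DifferentiableAt ℝ ψ (Φ.symm x)) :
    ‖fderiv ℝ (ψ ∘ Φ.symm) x‖ ≤ ‖fderiv ℝ ψ (Φ.symm x)‖ * (1 - ε)⁻¹ := by
  obtain ⟨e, he, he_symm⟩ := exists_hasFDerivAt_id_add hφ hε hDφ
  rw [(hψ.hasFDerivAt.comp x (Φ.hasFDerivAt_symm hx (hΦ ▸ he))).fderiv]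
  exact (ContinuousLinearMap.opNorm_comp_le _ _).trans
    (mul_le_mul_of_nonneg_left he_symm (norm_nonneg _))

end OpenPartialHomeomorph

end NearIdentity

section Coordinates

variable {n : ℕ}

def projCLM (n : ℕ) : Euc (n + 1) →L[ℝ] Euc n :=
  LinearMap.toContinuousLinearMap
    { toFun := projE n, map_add' := fun _ _ => rfl, map_smul' := fun _ _ => rfl }

@[simp]
theorem coe_projCLM : ⇑(projCLM n) = projE n := rfl

theorem norm_projE_le (z : Euc (n + 1)) : ‖projE n z‖ ≤ ‖z‖ := by
  rw [EuclideanSpace.norm_eq, EuclideanSpace.norm_eq, Fin.sum_univ_castSucc]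
  refine Real.sqrt_le_sqrt (le_add_of_le_of_nonneg (le_of_eq ?_) (sq_nonneg _))
  rfl

theorem norm_projCLM_le : ‖projCLM n‖ ≤ 1 :=
  (projCLM n).opNorm_le_bound zero_le_one fun z => by simpa using norm_projE_le z

theorem EuclideanSpace.norm_proj_le {ι : Type*} [Fintype ι] (i : ι) :
    ‖(EuclideanSpace.proj i : EuclideanSpace ℝ ι →L[ℝ] ℝ)‖ ≤ 1 :=
  ContinuousLinearMap.opNorm_le_bound _ zero_le_one fun z => by
    simpa using PiLp.norm_apply_le z i

theorem projE_graphPt (x : Euc n) (y : ℝ) : projE n (graphPt n x y) = x := by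
  ext i
  simp [projE, graphPt]

theorem pFlat_add_eq_graphPt (x : Euc n) (v : Euc (n + 1)) :
    (pFlat n).toFun x + v = graphPt n (x + projE n v) (v (Fin.last n)) := by
  ext i
  induction i using Fin.lastCases with
  | last => simp [pFlat, graphPt]
  | cast i => simp [pFlat, graphPt, projE]

end Coordinates

theorem ContinuousLinearMap.norm_fderiv_comp_le {E F G : Type*} [NormedAddCommGroup E]
    [NormedSpace ℝ E] [NormedAddCommGroup F] [NormedSpace ℝ F] [NormedAddCommGroup G]
    [NormedSpace ℝ G] {L : F →L[ℝ] G} (hL : ‖L‖ ≤ 1) {h : E → F} {x : E}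
    (hh : DifferentiableAt ℝ h x) : ‖fderiv ℝ (L ∘ h) x‖ ≤ ‖fderiv ℝ h x‖ := by
  rw [fderiv_comp x L.differentiableAt hh, L.fderiv]
  exact (ContinuousLinearMap.opNorm_comp_le _ _).trans (mul_le_of_le_one_left (norm_nonneg _) hL)

theorem ContinuousLinearMap.opNorm_le_card_mul {ι X : Type*} [Fintype ι] [DecidableEq ι]
    [NormedAddCommGroup X] [NormedSpace ℝ X] (T : EuclideanSpace ℝ ι →L[ℝ] X) {a : ℝ}
    (ha : 0 ≤ a) (hT : ∀ i, ‖T (EuclideanSpace.single i 1)‖ ≤ a) :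
    ‖T‖ ≤ Fintype.card ι * a := by
  refine T.opNorm_le_bound (by positivity) fun v => ?_
  calc ‖T v‖ = ‖∑ i, v i • T (EuclideanSpace.single i 1)‖ := by
        conv_lhs => rw [← (EuclideanSpace.basisFun ι ℝ).sum_repr v]
        simp
    _ ≤ ∑ i, ‖v i • T (EuclideanSpace.single i 1)‖ := norm_sum_le _ _
    _ ≤ ∑ _i : ι, ‖v‖ * a := by
        gcongr with i
        rw [norm_smul]
        exact mul_le_mul (PiLp.norm_apply_le v i) (hT i) (norm_nonneg _) (norm_nonneg _)
    _ = Fintype.card ι * a * ‖v‖ := by simp; ring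

section UnitCube

variable {n : ℕ}

theorem isCompact_unitCube : IsCompact (unitCube n) := by
  have : unitCube n = (EuclideanSpace.equiv (Fin n) ℝ) ⁻¹' Set.univ.pi fun _ => Icc 0 1 := by
    ext x
    simp only [unitCube, mem_preimage, mem_univ_pi]
    rfl
  rw [this]
  exact (EuclideanSpace.equiv (Fin n) ℝ).toHomeomorph.isCompact_preimage.2
    (isCompact_univ_pi fun _ => isCompact_Icc)

theorem closedBall_cCenter_subset_unitCube : closedBall (cCenter n) 2⁻¹ ⊆ unitCube n := by
  intro z hz i
  have hi : |z i - 2⁻¹| ≤ 2⁻¹ := by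
    have := (PiLp.norm_apply_le (z - cCenter n) i).trans (mem_closedBall_iff_norm.1 hz)
    simpa [cCenter] using this
  constructor <;> linarith [abs_le.1 hi]

theorem le_iSup_unitCube {φ : Euc n → ℝ} (hφ : Continuous φ) {x : Euc n}
    (hx : x ∈ unitCube n) : φ x ≤ ⨆ y : unitCube n, φ y :=
  have : CompactSpace (unitCube n) := isCompact_iff_compactSpace.1 isCompact_unitCube
  le_ciSup (isCompact_range (hφ.comp continuous_subtype_val)).bddAbove ⟨x, hx⟩

variable {X : Type*} [NormedAddCommGroup X] [NormedSpace ℝ X] {f : Euc n → X} {x : Euc n}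

theorem norm_le_cNorm (hf : Continuous f) (hx : x ∈ unitCube n) : ‖f x‖ ≤ cNorm f :=
  (le_iSup_unitCube hf.norm hx).trans (le_max_left _ _)

theorem norm_fderiv_apply_single_le_cNorm (hf : ContDiff ℝ 1 f) (hx : x ∈ unitCube n)
    (i : Fin n) : ‖fderiv ℝ f x (EuclideanSpace.single i 1)‖ ≤ cNorm f := by
  have hcont : Continuous fun y => ‖fderiv ℝ f y (EuclideanSpace.single i 1)‖ :=
    ((hf.continuous_fderiv one_ne_zero).clm_apply continuous_const).norm
  refine (le_iSup_unitCube hcont hx).trans (le_trans ?_ (le_max_right _ _))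
  exact le_ciSup (f := fun j : Fin n => ⨆ y : unitCube n,
    ‖fderiv ℝ f y (EuclideanSpace.single j 1)‖) (Set.finite_range _).bddAbove i

theorem norm_fderiv_le_cNorm (hf : ContDiff ℝ 1 f) (hx : x ∈ unitCube n) :
    ‖fderiv ℝ f x‖ ≤ n * cNorm f := by
  have hcNorm : 0 ≤ cNorm f := (norm_nonneg _).trans (norm_le_cNorm hf.continuous hx)
  simpa using (fderiv ℝ f x).opNorm_le_card_mul hcNorm (norm_fderiv_apply_single_le_cNorm hf hx)

end UnitCube

section Graph

variable {n : ℕ} {h : Euc n → Euc (n + 1)}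

theorem graphPt_mem_cylinder {s : ℝ} {x : Euc n} {y : ℝ} :
    graphPt n x y ∈ cylinder n s ↔ x ∈ ball (cCenter n) s := by
  show projE n (graphPt n x y) ∈ ball (cCenter n) s ↔ _
  rw [projE_graphPt]

theorem image_add_inter_cylinder_eq_graph {s : ℝ} (Φ : OpenPartialHomeomorph (Euc n) (Euc n))
    (hΦ : ⇑Φ = fun z => z + projE n (h z)) (hsource : Φ.source ⊆ unitCube n)
    (htarget : ball (cCenter n) s ⊆ Φ.target)
    (hmem : ∀ z ∈ unitCube n, Φ z ∈ ball (cCenter n) s → z ∈ Φ.source) :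
    (fun z => (pFlat n).toFun z + h z) '' unitCube n ∩ cylinder n s =
      (fun x => graphPt n x (h (Φ.symm x) (Fin.last n))) '' ball (cCenter n) s := by
  have hgraph : ∀ z, (pFlat n).toFun z + h z = graphPt n (Φ z) (h z (Fin.last n)) := fun z => by
    rw [hΦ, pFlat_add_eq_graphPt]
  ext w
  constructor
  · rintro ⟨⟨z, hz, rfl⟩, hcyl⟩
    have hΦz : Φ z ∈ ball (cCenter n) s := by
      rw [← graphPt_mem_cylinder (y := h z (Fin.last n)), ← hgraph]
      exact hcyl
    refine ⟨Φ z, hΦz, ?_⟩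
    dsimp only
    rw [hgraph, Φ.left_inv (hmem z hz hΦz)]
  · rintro ⟨x, hx, rfl⟩
    have hsymm := Φ.map_target (htarget hx)
    refine ⟨⟨Φ.symm x, hsource hsymm, ?_⟩, ?_⟩
    · dsimp only
      rw [hgraph, Φ.right_inv (htarget hx)]
    · exact graphPt_mem_cylinder.2 hx

theorem exists_graph_of_norm_le (hh : ContDiff ℝ 1 h) {δ ε : ℝ} (hδ : δ ≤ 16⁻¹) (hε : ε ≤ 2⁻¹)
    (hhδ : ∀ z ∈ unitCube n, ‖h z‖ ≤ δ) (hhε : ∀ z ∈ unitCube n, ‖fderiv ℝ h z‖ ≤ ε) :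
    ∃ g : Euc n → ℝ, (∀ x ∈ ball (cCenter n) 8⁻¹,
        ContDiffAt ℝ 1 g x ∧ |g x| ≤ δ ∧ ‖fderiv ℝ g x‖ ≤ 2 * ε) ∧
      (fun z => (pFlat n).toFun z + h z) '' unitCube n ∩ cylinder n 8⁻¹ =
        (fun x => graphPt n x (g x)) '' ball (cCenter n) 8⁻¹ := by
  set c := cCenter n
  have hc : c ∈ unitCube n := closedBall_cCenter_subset_unitCube (mem_closedBall_self (by norm_num))
  have hball : ball c 2⁻¹ ⊆ unitCube n :=
    ball_subset_closedBall.trans closedBall_cCenter_subset_unitCube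
  set φ := projCLM n ∘ h
  set last : Euc (n + 1) →L[ℝ] ℝ := EuclideanSpace.proj (Fin.last n)
  set ψ := last ∘ h
  have hφ : ContDiff ℝ 1 φ := (projCLM n).contDiff.comp hh
  have hψ : ContDiff ℝ 1 ψ := last.contDiff.comp hh
  have hDφ : ∀ z ∈ unitCube n, ‖fderiv ℝ φ z‖ ≤ ε := fun z hz =>
    (ContinuousLinearMap.norm_fderiv_comp_le norm_projCLM_le
      (hh.differentiable one_ne_zero z)).trans (hhε z hz)
  have hDψ : ∀ z ∈ unitCube n, ‖fderiv ℝ ψ z‖ ≤ ε := fun z hz =>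
    (ContinuousLinearMap.norm_fderiv_comp_le (EuclideanSpace.norm_proj_le (Fin.last n))
      (hh.differentiable one_ne_zero z)).trans (hhε z hz)
  have hφ_le : ∀ z ∈ unitCube n, ‖φ z‖ ≤ δ := fun z hz => (norm_projE_le _).trans (hhδ z hz)
  have hε0 : 0 ≤ ε := (norm_nonneg _).trans (hhε c hc)
  have hinv : (1 - ε)⁻¹ ≤ 2 := by rw [inv_le_comm₀ (by linarith) two_pos]; linarith
  obtain ⟨Φ, hΦ, hsource, htarget⟩ := exists_openPartialHomeomorph_id_add (c := c) (R := 2⁻¹)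
    (fun z _ => hφ.differentiable one_ne_zero z) (fun z hz => hDφ z (hball hz)) hε0 (by linarith)
  have hsub : ball c 8⁻¹ ⊆ Φ.target := by
    -- `Φ` maps `B̄(c, 3/8)` onto a superset of `B̄(c + φ c, (1 - ε) 3/8) ⊇ B(c, 1/8)`.
    refine ball_subset_closedBall.trans ((closedBall_subset_closedBall' ?_).trans
      (htarget (3 / 8) (by norm_num) (by norm_num)))
    rw [dist_self_add_right]
    linarith [hφ_le c hc]
  have hsymm : ∀ x ∈ ball c 8⁻¹, Φ.symm x ∈ unitCube n := fun x hx =>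
    hball (hsource ▸ Φ.map_target (hsub hx))
  refine ⟨ψ ∘ Φ.symm, fun x hx => ⟨?_, ?_, ?_⟩, ?_⟩
  · exact hψ.contDiffAt.comp x (Φ.contDiffAt_symm_of_eq_id_add hΦ (hsub hx) one_ne_zero
      hφ.contDiffAt ((hDφ _ (hsymm x hx)).trans_lt (by linarith)))
  · exact (PiLp.norm_apply_le _ _).trans (hhδ _ (hsymm x hx))
  · calc ‖fderiv ℝ (ψ ∘ Φ.symm) x‖ ≤ ‖fderiv ℝ ψ (Φ.symm x)‖ * (1 - ε)⁻¹ :=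
          Φ.norm_fderiv_comp_symm_le_of_eq_id_add hΦ (hsub hx) (hφ.differentiable one_ne_zero _)
            (by linarith) (hDφ _ (hsymm x hx)) (hψ.differentiable one_ne_zero _)
      _ ≤ ε * 2 := mul_le_mul (hDψ _ (hsymm x hx)) hinv (inv_nonneg.2 (by linarith)) hε0
      _ = 2 * ε := mul_comm _ _
  · refine image_add_inter_cylinder_eq_graph Φ hΦ (hsource ▸ hball) hsub fun z hz hΦz => ?_
    rw [hΦ] at hΦz
    rw [hsource, mem_ball]
    calc dist z c ≤ dist z (z + φ z) + dist (z + φ z) c := dist_triangle _ _ _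
      _ < 2⁻¹ := by rw [dist_self_add_right]; linarith [hφ_le z hz, mem_ball.1 hΦz]

end Graph

theorem surfaces_near_flat_are_graphs_general (n : ℕ) :
    ∃ s : ℝ, 0 < s ∧ ∀ r : ℝ, 0 < r → r < 1 / 32 → ∃ δ : ℝ, 0 < δ ∧
      ∀ f : GammaN n (Euc (n + 1)), cNorm (f.toFun - (pFlat n).toFun) < δ →
        ∃ g : Euc n → ℝ, ContDiffOn ℝ 1 g (Metric.ball (cCenter n) s) ∧
          (∀ x ∈ Metric.ball (cCenter n) s, |g x| ≤ r) ∧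
          (∀ x ∈ Metric.ball (cCenter n) s, ∀ i : Fin n,
            |fderiv ℝ g x (EuclideanSpace.single i 1)| ≤ r) ∧
          f.toFun '' unitCube n ∩ cylinder n s =
            (fun x => graphPt n x (g x)) '' Metric.ball (cCenter n) s := by
  refine ⟨8⁻¹, by norm_num, fun r hr hr32 => ⟨r / (2 * (n + 1)), by positivity, fun f hf => ?_⟩⟩
  set h := f.toFun - (pFlat n).toFun
  have hh : ContDiff ℝ 1 h := f.contDiff.sub (pFlat n).contDiff
  have hδ : cNorm h ≤ r / 2 := hf.le.trans (div_le_div_of_nonneg_left hr.le two_pos (by linarith))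
  have hnδ : n * cNorm h ≤ r / 2 := calc
    n * cNorm h ≤ n * (r / (2 * (n + 1))) := by gcongr
    _ = r / 2 * (n / (n + 1)) := by field_simp
    _ ≤ r / 2 :=
      mul_le_of_le_one_right (by positivity) (div_le_one_of_le₀ (by linarith) (by positivity))
  obtain ⟨g, hg, hgraph⟩ := exists_graph_of_norm_le hh (by linarith) (by linarith)
    (fun z hz => (norm_le_cNorm hh.continuous hz).trans hδ)
    (fun z hz => (norm_fderiv_le_cNorm hh hz).trans hnδ)
  refine ⟨g, fun x hx => (hg x hx).1.contDiffWithinAt,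
    fun x hx => (hg x hx).2.1.trans (by linarith), fun x hx i => ?_, ?_⟩
  · calc |fderiv ℝ g x (EuclideanSpace.single i 1)|
        ≤ ‖fderiv ℝ g x‖ * ‖(EuclideanSpace.single i 1 : Euc n)‖ := (fderiv ℝ g x).le_opNorm _
      _ ≤ 2 * (r / 2) * 1 := by
        rw [PiLp.norm_single, norm_one]
        gcongr
        exact (hg x hx).2.2
      _ = r := by ring
  · convert hgraph
    simp [h]

/-- Surfaces `C^1`-close to the flat surface `p(x) = (x, 0)` are graphs of
`C^1` functions with small `C^1` norm over the ball `B(c, s)`, where `c = (1/2, …, 1/2)`. -/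
theorem surfaces_near_flat_are_graphs (n : ℕ) (hn : 2 < n) :
    ∃ s : ℝ, 0 < s ∧ ∀ r : ℝ, 0 < r → r < 1 / 32 → ∃ δ : ℝ, 0 < δ ∧
      ∀ f : GammaN n (Euc (n + 1)), cNorm (f.toFun - (pFlat n).toFun) < δ →
        ∃ g : Euc n → ℝ, ContDiffOn ℝ 1 g (Metric.ball (cCenter n) s) ∧
          (∀ x ∈ Metric.ball (cCenter n) s, |g x| ≤ r) ∧
          (∀ x ∈ Metric.ball (cCenter n) s, ∀ i : Fin n,
            |fderiv ℝ g x (EuclideanSpace.single i 1)| ≤ r) ∧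
          f.toFun '' unitCube n ∩ cylinder n s =
            (fun x => graphPt n x (g x)) '' Metric.ball (cCenter n) s :=
  surfaces_near_flat_are_graphs_general n

end
end

section
/- Let n≥1, c∈ℝ^n, s>0, 0<ε<1, r^0>0 and l≥0. Suppose G^1,…,G^l are finite families of open balls in ℝ^n and r^1,…,r^l>0 satisfy (vacuously if l=0): for each 1≤q≤l every ball in G^q has radius r^q and r^q≤ε·r^{q−1}; for each 1≤q≤l the balls {(1/ε)B : B∈G^q} are pairwise disjoint and contained in B(c,s); and any two balls from {(1/ε)B : B∈G^1∪…∪G^l} are either disjoint or one is contained in the other. Then there exist a finite family G^{l+1} of open balls in ℝ^n and r^{l+1} with 0<r^{l+1}≤ε·r^l such that: every ball in G^{l+1} has radius r^{l+1}; the balls {(1/ε)B : B∈G^{l+1}} are pairwise disjoint and contained in B(c,s); any two balls from {(1/ε)B : B∈G^1∪…∪G^{l+1}} are either disjoint or one is contained in the other; and L^n(∪_{B∈G^{l+1}}B) ≥ (ε^n/2^{n+1})·L^n(B(c,s)∖∪_{B∈G^1∪…∪G^l}B). -/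
/-!
Call a point `δ`-good if its `δ`-ball stays inside `B(c, s)` and crosses none of the spheres
`∂((1/ε)B)`, `B ∈ G^1 ∪ … ∪ G^l`. These finitely many spheres are null, so for some `δ > 0` the
good points fill more than half of `B(c, s)`. With `ρ = min δ r^l`, take a maximal
`2ρ`-separated set `N` of good points and let `G^{l+1}` consist of the balls `B(x, ερ)`, `x ∈ N`.
Their enlargements `B(x, ρ)` are disjoint, lie in `B(c, s)`, and are nested in or disjoint from
every old enlarged ball since they cross none of its boundary. By maximality the balls
`B(x, 2ρ)` cover the good points, so `L^n(⋃ G^{l+1}) ≥ (ε/2)^n · L^n(B(c, s)) / 2`.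
-/

open Set Metric MeasureTheory

noncomputable section

open Filter Topology Module
open scoped ENNReal NNReal

theorem ENNReal.ofReal_pow_div_two_pow_succ_mul (ε : ℝ) (d : ℕ) (a : ℝ≥0∞) :
    ENNReal.ofReal (ε ^ d / 2 ^ (d + 1)) * a = ENNReal.ofReal ((ε / 2) ^ d) * (a / 2) := by
  rw [div_pow, pow_succ, ← div_div, ENNReal.ofReal_div_of_pos two_pos, ENNReal.ofReal_ofNat]
  simp only [div_eq_mul_inv]
  ring

section PseudoMetric

variable {X : Type*} [PseudoMetricSpace X]

theorem TotallyBounded.exists_finset_separated_cover {A : Set X} (hA : TotallyBounded A)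
    {ρ : ℝ} (hρ : 0 < ρ) :
    ∃ N : Finset X, ↑N ⊆ A ∧ (N : Set X).Pairwise (fun x y => 2 * ρ < dist x y) ∧
      A ⊆ ⋃ x ∈ N, closedBall x (2 * ρ) := by
  lift ρ to ℝ≥0 using hρ.le
  obtain ⟨C, -, hCfin, hC⟩ := exists_finite_isCover_of_totallyBounded (ne_of_gt hρ) hA
  have hpack : packingNumber (2 * ρ) A ≠ ⊤ :=
    ((packingNumber_two_mul_le_externalCoveringNumber ρ A).trans
      hC.externalCoveringNumber_le_encard).trans_lt hCfin.encard_lt_top |>.ne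
  have hfin : (maximalSeparatedSet (2 * ρ) A).Finite := by
    rw [← Set.encard_ne_top_iff, encard_maximalSeparatedSet hpack]
    exact hpack
  refine ⟨hfin.toFinset, by simpa using maximalSeparatedSet_subset, ?_, ?_⟩
  · intro x hx y hy hxy
    have : ((2 * ρ : ℝ≥0) : ℝ≥0∞) < edist x y := isSeparated_maximalSeparatedSet
      (by simpa using hx) (by simpa using hy) hxy
    rw [edist_nndist, ENNReal.coe_lt_coe, ← NNReal.coe_lt_coe, coe_nndist] at this
    simpa using this
  · simpa using isCover_iff_subset_iUnion_closedBall.1 (isCover_maximalSeparatedSet hpack)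

/-- `δ ≤ |dist x p.1 - p.2|` says that `ball x δ` does not cross `sphere p.1 p.2`. -/
def awayFromSpheres (c : X) (s : ℝ) (P : Finset (X × ℝ)) (δ : ℝ) : Set X :=
  {x | dist x c + δ ≤ s ∧ ∀ p ∈ P, δ ≤ |dist x p.1 - p.2|}

variable {c x : X} {s δ ρ : ℝ} {P : Finset (X × ℝ)}

theorem awayFromSpheres_antitone : Antitone (awayFromSpheres c s P) :=
  fun _ _ hδ _ hx => ⟨by linarith [hx.1], fun p hp => hδ.trans (hx.2 p hp)⟩

theorem awayFromSpheres_subset_ball (hδ : 0 < δ) : awayFromSpheres c s P δ ⊆ ball c s :=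
  fun _ hx => mem_ball.2 (by linarith [hx.1])

theorem ball_subset_ball_of_mem_awayFromSpheres (hx : x ∈ awayFromSpheres c s P δ)
    (hρ : ρ ≤ δ) : ball x ρ ⊆ ball c s :=
  ball_subset_ball' (by linarith [hx.1])

theorem disjoint_or_subset_of_mem_awayFromSpheres (hx : x ∈ awayFromSpheres c s P δ)
    {p : X × ℝ} (hp : p ∈ P) (hρ : ρ ≤ δ) :
    Disjoint (ball p.1 p.2) (ball x ρ) ∨ ball x ρ ⊆ ball p.1 p.2 := by
  rcases le_abs.1 (hx.2 p hp) with hout | hin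
  · exact Or.inl (ball_disjoint_ball (by rw [dist_comm]; linarith))
  · exact Or.inr (ball_subset_ball' (by linarith))

theorem eventually_mem_awayFromSpheres (hx : x ∈ ball c s)
    (hxP : ∀ p ∈ P, x ∉ sphere p.1 p.2) : ∀ᶠ δ in 𝓝 0, x ∈ awayFromSpheres c s P δ := by
  filter_upwards [eventually_le_nhds (sub_pos.2 (mem_ball.1 hx)),
    (eventually_all_finset P).2 fun p hp => eventually_le_nhds
      (abs_pos.2 (sub_ne_zero.2 (hxP p hp)))] with δ hc hP
  exact ⟨by linarith, hP⟩

theorem exists_lt_measure_awayFromSpheres [MeasurableSpace X] (μ : Measure X)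
    (hP : ∀ p ∈ P, μ (sphere p.1 p.2) = 0) {m : ℝ≥0∞} (hm : m < μ (ball c s)) :
    ∃ δ > 0, m < μ (awayFromSpheres c s P δ) := by
  set A : ℕ → Set X := fun k => awayFromSpheres c s P (1 / (k + 1))
  have hA : Monotone A := fun _ _ h => awayFromSpheres_antitone (Nat.one_div_le_one_div h)
  have hcover : ball c s ⊆ (⋃ k, A k) ∪ ⋃ p ∈ P, sphere p.1 p.2 := by
    intro x hx
    refine or_iff_not_imp_right.2 fun hxP => ?_
    obtain ⟨k, hk⟩ := (tendsto_one_div_add_atTop_nhds_zero_nat.eventually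
      (eventually_mem_awayFromSpheres hx fun p hp hxp => hxP (mem_biUnion hp hxp))).exists
    exact mem_iUnion.2 ⟨k, hk⟩
  have hnull : μ (⋃ p ∈ P, sphere p.1 p.2) = 0 :=
    (measure_biUnion_null_iff P.countable_toSet).2 hP
  have hle : μ (ball c s) ≤ ⨆ k, μ (A k) := calc
    μ (ball c s) ≤ μ (⋃ k, A k) + μ (⋃ p ∈ P, sphere p.1 p.2) :=
      (measure_mono hcover).trans (measure_union_le _ _)
    _ = ⨆ k, μ (A k) := by rw [hnull, add_zero, hA.measure_iUnion]
  obtain ⟨k, hk⟩ := lt_iSup_iff.1 (hm.trans_le hle)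
  exact ⟨1 / (k + 1), by positivity, hk⟩

end PseudoMetric

section AddHaar

variable {E : Type*} [NormedAddCommGroup E] [NormedSpace ℝ E] [MeasurableSpace E] [BorelSpace E]
  [FiniteDimensional ℝ E] [Nontrivial E] (μ : Measure E) [μ.IsAddHaarMeasure]

theorem ofReal_pow_div_mul_measure_le_of_cover_of_disjoint {A : Set E} {N : Finset E} {t R : ℝ}
    (ht : 0 ≤ t) (hR : 0 < R) (hdisj : (N : Set E).PairwiseDisjoint (ball · t))
    (hcov : A ⊆ ⋃ x ∈ N, closedBall x R) :
    ENNReal.ofReal ((t / R) ^ finrank ℝ E) * μ A ≤ μ (⋃ x ∈ N, ball x t) := by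
  have hscale : ENNReal.ofReal ((t / R) ^ finrank ℝ E) * ENNReal.ofReal (R ^ finrank ℝ E) =
      ENNReal.ofReal (t ^ finrank ℝ E) := by
    rw [← ENNReal.ofReal_mul (by positivity), ← mul_pow, div_mul_cancel₀ _ hR.ne']
  calc ENNReal.ofReal ((t / R) ^ finrank ℝ E) * μ A
      ≤ ENNReal.ofReal ((t / R) ^ finrank ℝ E) * ∑ x ∈ N, μ (closedBall x R) := by
        gcongr
        exact (measure_mono hcov).trans (measure_biUnion_finset_le _ _)
    _ = ∑ x ∈ N, μ (ball x t) := by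
        simp only [Measure.addHaar_closedBall μ _ hR.le, Measure.addHaar_ball μ _ ht,
          Finset.sum_const, nsmul_eq_mul, ← hscale]
        ring
    _ = μ (⋃ x ∈ N, ball x t) := (measure_biUnion_finset hdisj fun _ _ => measurableSet_ball).symm

theorem TotallyBounded.exists_separated_finset_measure_iUnion_ball_ge {A : Set E}
    (hA : TotallyBounded A) {ρ κ : ℝ} (hρ : 0 < ρ) (hκ0 : 0 ≤ κ) (hκ1 : κ ≤ 1) :
    ∃ N : Finset E, ↑N ⊆ A ∧ (N : Set E).Pairwise (fun x y => 2 * ρ < dist x y) ∧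
      ENNReal.ofReal ((κ / 2) ^ finrank ℝ E) * μ A ≤ μ (⋃ x ∈ N, ball x (κ * ρ)) := by
  obtain ⟨N, hNA, hNsep, hNcov⟩ := hA.exists_finset_separated_cover hρ
  refine ⟨N, hNA, hNsep, ?_⟩
  have hdisj : (N : Set E).PairwiseDisjoint (ball · (κ * ρ)) :=
    fun x hx y hy hxy => ball_disjoint_ball (by nlinarith [hNsep hx hy hxy])
  have := ofReal_pow_div_mul_measure_le_of_cover_of_disjoint μ (by positivity) (by positivity)
    hdisj hNcov
  rwa [mul_div_mul_right _ _ hρ.ne'] at this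

end AddHaar

theorem inductive_ball_family_step_general (n : ℕ) (hn : 1 ≤ n) (c : Euc n) (s : ℝ) (hs : 0 < s)
    (ε : ℝ) (hε0 : 0 < ε) (hε1 : ε < 1) (l : ℕ)
    (G : ℕ → Finset (Euc n)) (r : ℕ → ℝ) (hr0 : 0 < r 0)
    (hrad : ∀ q, 1 ≤ q → q ≤ l → 0 < r q ∧ r q ≤ ε * r (q - 1)) :
    ∃ (G' : Finset (Euc n)) (r' : ℝ), 0 < r' ∧ r' ≤ ε * r l ∧
      (∀ z ∈ G', Metric.ball z (r' / ε) ⊆ Metric.ball c s ∧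
        ∀ z' ∈ G', z ≠ z' → Metric.ball z (r' / ε) ∩ Metric.ball z' (r' / ε) = ∅) ∧
      (∀ q, 1 ≤ q → q ≤ l → ∀ z ∈ G q, ∀ z' ∈ G',
        Metric.ball z (r q / ε) ∩ Metric.ball z' (r' / ε) = ∅ ∨
        Metric.ball z (r q / ε) ⊆ Metric.ball z' (r' / ε) ∨
        Metric.ball z' (r' / ε) ⊆ Metric.ball z (r q / ε)) ∧
      ENNReal.ofReal (ε ^ n / 2 ^ (n + 1)) *
          volume (Metric.ball c s \ ⋃ q ∈ Finset.Icc 1 l, ⋃ z ∈ G q, Metric.ball z (r q)) ≤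
        volume (⋃ z ∈ G', Metric.ball z r') := by
  have : Nontrivial (Euc n) :=
    Module.nontrivial_of_finrank_pos (R := ℝ) (by rw [finrank_euclideanSpace_fin]; omega)
  have hrl : 0 < r l := by
    rcases Nat.eq_zero_or_pos l with rfl | hl
    exacts [hr0, (hrad l hl le_rfl).1]
  set P : Finset (Euc n × ℝ) :=
    (Finset.Icc 1 l).biUnion fun q => (G q).image fun z => (z, r q / ε)
  obtain ⟨δ, hδ, hhalf⟩ := exists_lt_measure_awayFromSpheres volume (P := P)
    (fun p _ => Measure.addHaar_sphere volume p.1 p.2)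
    (ENNReal.half_lt_self (measure_ball_pos volume c hs).ne' measure_ball_lt_top.ne)
  set ρ := min δ (r l)
  have hρ : 0 < ρ := lt_min hδ hrl
  have hρδ : ρ ≤ δ := min_le_left _ _
  have hbdd : TotallyBounded (awayFromSpheres c s P δ) :=
    (isCompact_closedBall c s).totallyBounded.subset
      ((awayFromSpheres_subset_ball hδ).trans ball_subset_closedBall)
  obtain ⟨N, hNA, hNsep, hpack⟩ :=
    hbdd.exists_separated_finset_measure_iUnion_ball_ge volume hρ hε0.le hε1.le
  rw [finrank_euclideanSpace_fin] at hpack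
  have hρε : ε * ρ / ε = ρ := mul_div_cancel_left₀ _ hε0.ne'
  refine ⟨N, ε * ρ, mul_pos hε0 hρ, mul_le_mul_of_nonneg_left (min_le_right _ _) hε0.le,
    fun z hz => ⟨?_, fun z' hz' hne => ?_⟩, fun q hq1 hq2 z hz z' hz' => ?_, ?_⟩
  · rw [hρε]
    exact ball_subset_ball_of_mem_awayFromSpheres (hNA hz) hρδ
  · rw [hρε, ← disjoint_iff_inter_eq_empty]
    exact ball_disjoint_ball (by linarith [hNsep hz hz' hne])
  · have hp : (z, r q / ε) ∈ P :=
      Finset.mem_biUnion.2 ⟨q, Finset.mem_Icc.2 ⟨hq1, hq2⟩, Finset.mem_image_of_mem _ hz⟩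
    rw [hρε, ← disjoint_iff_inter_eq_empty]
    exact (disjoint_or_subset_of_mem_awayFromSpheres (hNA hz') hp hρδ).imp_right Or.inr
  · calc ENNReal.ofReal (ε ^ n / 2 ^ (n + 1)) *
          volume (ball c s \ ⋃ q ∈ Finset.Icc 1 l, ⋃ z ∈ G q, ball z (r q))
        ≤ ENNReal.ofReal ((ε / 2) ^ n) * (volume (ball c s) / 2) := by
          rw [ENNReal.ofReal_pow_div_two_pow_succ_mul]
          gcongr
          exact sdiff_subset
      _ ≤ ENNReal.ofReal ((ε / 2) ^ n) * volume (awayFromSpheres c s P δ) :=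
          mul_le_mul_right hhalf.le _
      _ ≤ _ := hpack

/-- The inductive construction step: given finite families `G^1, …, G^l` of
balls (each `G^q` given by a finite set of centres and a common radius `r q`) whose
`(1/ε)`-enlargements are disjoint, contained in `B(c, s)` and pairwise nested or disjoint,
there is a further family `G^{l+1}` of balls of a common radius `r' ≤ ε · r l` with the same
properties covering at least an `ε^n / 2^{n+1}` proportion of the part of `B(c, s)` not yet
covered. -/
theorem inductive_ball_family_step (n : ℕ) (hn : 1 ≤ n) (c : Euc n) (s : ℝ) (hs : 0 < s)
    (ε : ℝ) (hε0 : 0 < ε) (hε1 : ε < 1) (l : ℕ)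
    (G : ℕ → Finset (Euc n)) (r : ℕ → ℝ) (hr0 : 0 < r 0)
    (hrad : ∀ q, 1 ≤ q → q ≤ l → 0 < r q ∧ r q ≤ ε * r (q - 1))
    (hdisj : ∀ q, 1 ≤ q → q ≤ l → ∀ z ∈ G q,
      Metric.ball z (r q / ε) ⊆ Metric.ball c s ∧
      ∀ z' ∈ G q, z ≠ z' → Metric.ball z (r q / ε) ∩ Metric.ball z' (r q / ε) = ∅)
    (hnest : ∀ q, 1 ≤ q → q ≤ l → ∀ q', 1 ≤ q' → q' ≤ l → ∀ z ∈ G q, ∀ z' ∈ G q',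
      Metric.ball z (r q / ε) ∩ Metric.ball z' (r q' / ε) = ∅ ∨
      Metric.ball z (r q / ε) ⊆ Metric.ball z' (r q' / ε) ∨
      Metric.ball z' (r q' / ε) ⊆ Metric.ball z (r q / ε)) :
    ∃ (G' : Finset (Euc n)) (r' : ℝ), 0 < r' ∧ r' ≤ ε * r l ∧
      (∀ z ∈ G', Metric.ball z (r' / ε) ⊆ Metric.ball c s ∧
        ∀ z' ∈ G', z ≠ z' → Metric.ball z (r' / ε) ∩ Metric.ball z' (r' / ε) = ∅) ∧
      (∀ q, 1 ≤ q → q ≤ l → ∀ z ∈ G q, ∀ z' ∈ G',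
        Metric.ball z (r q / ε) ∩ Metric.ball z' (r' / ε) = ∅ ∨
        Metric.ball z (r q / ε) ⊆ Metric.ball z' (r' / ε) ∨
        Metric.ball z' (r' / ε) ⊆ Metric.ball z (r q / ε)) ∧
      ENNReal.ofReal (ε ^ n / 2 ^ (n + 1)) *
          volume (Metric.ball c s \ ⋃ q ∈ Finset.Icc 1 l, ⋃ z ∈ G q, Metric.ball z (r q)) ≤
        volume (⋃ z ∈ G', Metric.ball z r') :=
  inductive_ball_family_step_general n hn c s hs ε hε0 hε1 l G r hr0 hrad

end
end

section
/- Let n≥1. There exists a constant C>0 depending only on n such that: for every ball B=B(x,t)⊂ℝ^n, every ε>0, every C^1 function g:B→ℝ with ‖∇g‖≤1 on B, and every affine function a:B→ℝ (so ∇a is constant) with ‖∇a‖≤1, if |g(y)−a(y)|≤εt for all y∈B, then |∫_B (‖∇g‖² − ‖∇a‖² − ‖∇(g−a)‖²) dL^n| ≤ C·ε·L^n(B). -/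
open Set Metric MeasureTheory
open scoped RealInnerProductSpace

noncomputable section

/-!
Because `a` is affine, `‖∇g‖² − ‖∇a‖² − ‖∇(g − a)‖² = 2 ∂ᵤ(g − a)` pointwise, so it suffices to
bound `∫_B ∂ᵤ f` for `f = g − a`, where `|f| ≤ εt` on `B` and, after a Lipschitz extension of `g`,
`f` is Lipschitz on the whole space. That integral is the limit of the difference quotients
`h⁻¹ (∫_{B + hu} f − ∫_B f)`. The balls `B + hu` and `B` differ by a set of measure at most
`2 ((t + h)ⁿ − tⁿ) |B(0, 1)|`, on which `|f| ≤ εt + O(h)`; letting `h → 0` gives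
`|∫_B ∂ᵤ f| ≤ 2nε |B|`.
-/

open Filter Module
open scoped NNReal Topology

theorem norm_sq_sub_norm_sq_sub_norm_sub_innerSL_sq {E : Type*} [NormedAddCommGroup E]
    [InnerProductSpace ℝ E] [CompleteSpace E] (L : E →L[ℝ] ℝ) (u : E) :
    ‖L‖ ^ 2 - ‖u‖ ^ 2 - ‖L - innerSL ℝ u‖ ^ 2 = 2 * (L - innerSL ℝ u) u := by
  obtain ⟨v, rfl⟩ : ∃ v, innerSL ℝ v = L :=
    ⟨(InnerProductSpace.toDual ℝ E).symm L, by ext y; simp⟩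
  rw [← map_sub, innerSL_apply_norm, innerSL_apply_norm, innerSL_apply_apply, inner_sub_left,
    norm_sub_sq_real, real_inner_self_eq_norm_sq]
  ring

theorem abs_setIntegral_sub_setIntegral_le {α : Type*} [MeasurableSpace α] {μ : Measure α}
    {f : α → ℝ} {s s' : Set α} {M : ℝ} (hs : MeasurableSet s) (hs' : MeasurableSet s')
    (hμs : μ s ≠ ⊤) (hμs' : μ s' ≠ ⊤) (hfs : IntegrableOn f s μ) (hfs' : IntegrableOn f s' μ)
    (hM : ∀ y ∈ s ∪ s', |f y| ≤ M) :
    |∫ y in s', f y ∂μ - ∫ y in s, f y ∂μ| ≤ M * (μ.real (s' \ s) + μ.real (s \ s')) := by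
  have hbound {r r' : Set α} (hr : μ r ≠ ⊤) (hrs : r ⊆ s ∪ s') :
      |∫ y in r \ r', f y ∂μ| ≤ M * μ.real (r \ r') := by
    simpa only [Real.norm_eq_abs] using norm_setIntegral_le_of_norm_le_const (f := f)
      ((measure_mono sdiff_subset).trans_lt hr.lt_top) fun y hy => hM y (hrs hy.1)
  rw [← integral_inter_add_sdiff hs hfs', ← integral_inter_add_sdiff hs' hfs, inter_comm,
    add_sub_add_left_eq_sub, mul_add]
  exact (abs_sub _ _).trans (add_le_add (hbound hμs' subset_union_right)
    (hbound hμs subset_union_left))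

theorem setIntegral_ball_comp_add_right {G : Type*} [NormedAddCommGroup G] [MeasurableSpace G]
    [BorelSpace G] (μ : Measure G) [μ.IsAddRightInvariant] (f : G → ℝ) (x v : G) (t : ℝ) :
    ∫ y in ball x t, f (y + v) ∂μ = ∫ y in ball (x + v) t, f y ∂μ := by
  have := (measurePreserving_add_right μ v).setIntegral_preimage_emb
    (measurableEmbedding_addRight v) f (ball (x + v) t)
  rwa [preimage_add_right_ball, add_sub_cancel_right] at this

section AddHaar

variable {E : Type*} [NormedAddCommGroup E] [NormedSpace ℝ E] [MeasurableSpace E] [BorelSpace E]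
  [FiniteDimensional ℝ E] (μ : Measure E) [μ.IsAddHaarMeasure]

theorem addHaar_real_ball_of_pos (x : E) {r : ℝ} (hr : 0 < r) :
    μ.real (ball x r) = r ^ finrank ℝ E * μ.real (ball 0 1) := by
  rw [measureReal_def, Measure.addHaar_ball_of_pos μ x hr, ENNReal.toReal_mul,
    ENNReal.toReal_ofReal (by positivity), measureReal_def]

theorem measureReal_ball_sdiff_ball_le {x x' : E} {t h : ℝ} (ht : 0 < t) (hx : dist x' x ≤ h) :
    μ.real (ball x' t \ ball x t) ≤
      ((t + h) ^ finrank ℝ E - t ^ finrank ℝ E) * μ.real (ball 0 1) := by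
  have hh : 0 ≤ h := dist_nonneg.trans hx
  calc μ.real (ball x' t \ ball x t) ≤ μ.real (ball x (t + h) \ ball x t) :=
        measureReal_mono (sdiff_subset_sdiff_left (ball_subset_ball' (by linarith)))
          (measure_ne_top_of_subset sdiff_subset measure_ball_lt_top.ne)
    _ = ((t + h) ^ finrank ℝ E - t ^ finrank ℝ E) * μ.real (ball 0 1) := by
        rw [measureReal_sdiff (ball_subset_ball (by linarith)) measurableSet_ball,
          addHaar_real_ball_of_pos μ x (by linarith), addHaar_real_ball_of_pos μ x ht]
        ring

theorem abs_setIntegral_slope_ball_le {f : E → ℝ} {K : ℝ≥0} (hf : LipschitzWith K f)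
    {x v : E} {t M h : ℝ} (ht : 0 < t) (hh : 0 < h) (hM : ∀ y ∈ ball x t, |f y| ≤ M)
    (hv : ‖v‖ ≤ 1) :
    |∫ y in ball x t, h⁻¹ * (f (y + h • v) - f y) ∂μ| ≤
      2 * (M + K * h) * (h⁻¹ * ((t + h) ^ finrank ℝ E - t ^ finrank ℝ E)) *
        μ.real (ball 0 1) := by
  have hstep : ‖h • v‖ ≤ h := by
    rw [norm_smul, Real.norm_of_nonneg hh.le]
    exact mul_le_of_le_one_right hh.le hv
  have hshift : dist (x + h • v) x ≤ h := by rwa [dist_eq_norm, add_sub_cancel_left]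
  have hM₀ : 0 ≤ M := (abs_nonneg _).trans (hM x (mem_ball_self ht))
  have hbound : ∀ y ∈ ball x t ∪ ball (x + h • v) t, |f y| ≤ M + K * h := by
    rintro y (hy | hy)
    · linarith [hM y hy, mul_nonneg K.coe_nonneg hh.le]
    · have hy' : y - h • v ∈ ball x t := by
        rw [mem_ball, dist_eq_norm, sub_sub, add_comm (h • v)]
        rwa [mem_ball, dist_eq_norm] at hy
      have hlip : |f y - f (y - h • v)| ≤ K * h := by
        rw [← Real.dist_eq]
        calc dist (f y) (f (y - h • v)) ≤ K * dist y (y - h • v) := hf.dist_le_mul _ _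
          _ ≤ K * h := by gcongr; rwa [dist_eq_norm, sub_sub_cancel]
      linarith [abs_sub_abs_le_abs_sub (f y) (f (y - h • v)), hM _ hy']
  have hint {φ : E → ℝ} (hφ : Continuous φ) (x' : E) : IntegrableOn φ (ball x' t) μ :=
    (hφ.locallyIntegrable.integrableOn_isCompact (isCompact_closedBall x' t)).mono_set
      ball_subset_closedBall
  have hMK : 0 ≤ M + K * h := add_nonneg hM₀ (by positivity)
  rw [integral_const_mul, integral_sub (hint (φ := fun y => f (y + h • v))
    (hf.continuous.comp (continuous_add_const _)) x)
    (hint hf.continuous x), setIntegral_ball_comp_add_right, abs_mul, abs_inv, abs_of_pos hh]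
  calc h⁻¹ * |∫ y in ball (x + h • v) t, f y ∂μ - ∫ y in ball x t, f y ∂μ|
      ≤ h⁻¹ * ((M + K * h) * (μ.real (ball (x + h • v) t \ ball x t) +
          μ.real (ball x t \ ball (x + h • v) t))) := by
        gcongr
        exact abs_setIntegral_sub_setIntegral_le measurableSet_ball measurableSet_ball
          measure_ball_lt_top.ne measure_ball_lt_top.ne (hint hf.continuous _)
          (hint hf.continuous _) hbound
    _ ≤ h⁻¹ * ((M + K * h) * (((t + h) ^ finrank ℝ E - t ^ finrank ℝ E) * μ.real (ball 0 1) +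
          ((t + h) ^ finrank ℝ E - t ^ finrank ℝ E) * μ.real (ball 0 1))) := by
        gcongr
        · exact measureReal_ball_sdiff_ball_le μ ht hshift
        · exact measureReal_ball_sdiff_ball_le μ ht (dist_comm x _ ▸ hshift)
    _ = _ := by ring

theorem tendsto_setIntegral_slope_lineDeriv {f : E → ℝ} {K : ℝ≥0} (hf : LipschitzWith K f)
    {s : Set E} (hs : MeasurableSet s) (hμs : μ s ≠ ⊤) (v : E) :
    Tendsto (fun h : ℝ => ∫ y in s, h⁻¹ * (f (y + h • v) - f y) ∂μ) (𝓝[>] 0)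
      (𝓝 (∫ y in s, lineDeriv ℝ f y v ∂μ)) := by
  have := hf.integral_inv_smul_sub_mul_tendsto_integral_lineDeriv_mul (μ := μ)
    ((integrable_indicator_iff hs).2 (integrableOn_const hμs (C := (1 : ℝ)))) v
  have hind (φ : E → ℝ) : ∫ y, φ y * s.indicator (fun _ => 1) y ∂μ = ∫ y in s, φ y ∂μ := by
    rw [← integral_indicator hs]
    congr 1 with y
    by_cases hy : y ∈ s <;> simp [hy]
  simpa only [smul_eq_mul, hind] using this

theorem abs_setIntegral_lineDeriv_ball_le {f : E → ℝ} {K : ℝ≥0} (hf : LipschitzWith K f)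
    {x v : E} {t M : ℝ} (ht : 0 < t) (hM : ∀ y ∈ ball x t, |f y| ≤ M) (hv : ‖v‖ ≤ 1) :
    |∫ y in ball x t, lineDeriv ℝ f y v ∂μ| ≤ 2 * finrank ℝ E * M / t * μ.real (ball x t) := by
  set d := finrank ℝ E
  have hslope : Tendsto (fun h : ℝ => h⁻¹ * ((t + h) ^ d - t ^ d)) (𝓝[>] 0)
      (𝓝 (d * t ^ (d - 1))) := by
    simpa using (hasDerivAt_pow d t).tendsto_slope_zero_right
  have hMK : Tendsto (fun h : ℝ => M + K * h) (𝓝[>] 0) (𝓝 M) := by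
    simpa using ((by fun_prop : Continuous fun h : ℝ => M + K * h).tendsto 0).mono_left
      nhdsWithin_le_nhds
  have key := le_of_tendsto_of_tendsto
    (tendsto_setIntegral_slope_lineDeriv μ hf measurableSet_ball measure_ball_lt_top.ne v).abs
    (((hMK.const_mul 2).mul hslope).mul_const (μ.real (ball 0 1)))
    (eventually_mem_nhdsWithin.mono fun h hh => abs_setIntegral_slope_ball_le μ hf ht hh hM hv)
  refine key.trans_eq ?_
  rw [addHaar_real_ball_of_pos μ x ht]
  rcases eq_or_ne d 0 with hd | hd
  · simp [hd]
  · rw [← pow_sub_one_mul hd t]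
    field_simp

end AddHaar

theorem exists_lipschitzWith_eqOn_of_norm_fderiv_le {E : Type*} [NormedAddCommGroup E]
    [NormedSpace ℝ E] {f : E → ℝ} {s : Set E} {K : ℝ≥0} (hs : Convex ℝ s)
    (hf : ∀ y ∈ s, DifferentiableAt ℝ f y) (hK : ∀ y ∈ s, ‖fderiv ℝ f y‖ ≤ K) :
    ∃ G : E → ℝ, LipschitzWith K G ∧ EqOn f G s :=
  (hs.lipschitzOnWith_of_nnnorm_fderiv_le hf fun y hy => hK y hy).extend_real

theorem norm_fderiv_sq_sub_norm_sq_sub_norm_fderiv_sub_affine_sq {E : Type*}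
    [NormedAddCommGroup E] [InnerProductSpace ℝ E] [CompleteSpace E] {g : E → ℝ} {y : E}
    (hg : DifferentiableAt ℝ g y) (u : E) (b : ℝ) :
    ‖fderiv ℝ g y‖ ^ 2 - ‖u‖ ^ 2 - ‖fderiv ℝ (fun z => g z - (⟪u, z⟫ + b)) y‖ ^ 2 =
      2 * lineDeriv ℝ (fun z => g z - (⟪u, z⟫ + b)) y u := by
  have hd : HasFDerivAt (fun z => g z - (⟪u, z⟫ + b)) (fderiv ℝ g y - innerSL ℝ u) y :=
    hg.hasFDerivAt.sub ((innerSL ℝ u).hasFDerivAt.add_const b)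
  rw [hd.fderiv, (hd.hasLineDerivAt u).lineDeriv]
  exact norm_sq_sub_norm_sq_sub_norm_sub_innerSL_sq _ u

theorem flatten_area_comparison_general (n : ℕ) :
    ∃ C : ℝ, 0 < C ∧ ∀ (x : Euc n) (t : ℝ), 0 < t → ∀ ε : ℝ, 0 < ε →
      ∀ g : Euc n → ℝ, ContDiffOn ℝ 1 g (Metric.ball x t) →
        (∀ y ∈ Metric.ball x t, ‖fderiv ℝ g y‖ ≤ 1) →
        ∀ (u : Euc n) (b : ℝ), ‖u‖ ≤ 1 →
          (∀ y ∈ Metric.ball x t, |g y - (⟪u, y⟫ + b)| ≤ ε * t) →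
          |∫ y in Metric.ball x t,
              (‖fderiv ℝ g y‖ ^ 2 - ‖u‖ ^ 2 -
                ‖fderiv ℝ (fun z => g z - (⟪u, z⟫ + b)) y‖ ^ 2)| ≤
            C * ε * (volume (Metric.ball x t)).toReal := by
  refine ⟨4 * n + 1, by positivity, ?_⟩
  intro x t ht ε hε g hg hg1 u b hu hclose
  have hgd (y : Euc n) (hy : y ∈ ball x t) : DifferentiableAt ℝ g y :=
    (hg.differentiableOn one_ne_zero y hy).differentiableAt (isOpen_ball.mem_nhds hy)
  obtain ⟨G, hG, hgG⟩ := exists_lipschitzWith_eqOn_of_norm_fderiv_le (K := 1)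
    (convex_ball x t) hgd (by simpa using hg1)
  set F : Euc n → ℝ := fun z => G z - (⟪u, z⟫ + b)
  have hF : LipschitzWith _ F := hG.sub ((innerSL ℝ u).lipschitz.add (LipschitzWith.const b))
  have hFg (y : Euc n) (hy : y ∈ ball x t) :
      lineDeriv ℝ (fun z => g z - (⟪u, z⟫ + b)) y u = lineDeriv ℝ F y u :=
    EventuallyEq.lineDeriv_eq <| eventually_of_mem (isOpen_ball.mem_nhds hy) fun z hz => by
      simp [F, hgG hz]
  have hFbd (y : Euc n) (hy : y ∈ ball x t) : |F y| ≤ ε * t := by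
    simpa [F, ← hgG hy] using hclose y hy
  calc _ = 2 * |∫ y in ball x t, lineDeriv ℝ F y u| := by
        rw [setIntegral_congr_fun measurableSet_ball fun y hy => by
          rw [norm_fderiv_sq_sub_norm_sq_sub_norm_fderiv_sub_affine_sq (hgd y hy), hFg y hy],
          integral_const_mul, abs_mul, abs_two]
    _ ≤ 2 * (2 * n * (ε * t) / t * (volume (ball x t)).toReal) := by
        gcongr
        simpa [measureReal_def] using abs_setIntegral_lineDeriv_ball_le volume hF ht hFbd hu
    _ = 4 * n * ε * (volume (ball x t)).toReal := by field_simp; ring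
    _ ≤ (4 * n + 1) * ε * (volume (ball x t)).toReal := by gcongr; linarith

/-- There is `C = C(n) > 0` such that for every ball `B = B(x, t) ⊆ ℝ^n`,
every `C^1` function `g` with `|∇g| ≤ 1` on `B` and every affine `a(y) = ⟪u, y⟫ + b` with
`‖u‖ ≤ 1`, if `|g − a| ≤ ε t` on `B` then
`|∫_B (|∇g|² − |∇a|² − |∇(g − a)|²)| ≤ C ε L^n(B)`. -/
theorem flatten_area_comparison (n : ℕ) (hn : 1 ≤ n) :
    ∃ C : ℝ, 0 < C ∧ ∀ (x : Euc n) (t : ℝ), 0 < t → ∀ ε : ℝ, 0 < ε →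
      ∀ g : Euc n → ℝ, ContDiffOn ℝ 1 g (Metric.ball x t) →
        (∀ y ∈ Metric.ball x t, ‖fderiv ℝ g y‖ ≤ 1) →
        ∀ (u : Euc n) (b : ℝ), ‖u‖ ≤ 1 →
          (∀ y ∈ Metric.ball x t, |g y - (⟪u, y⟫ + b)| ≤ ε * t) →
          |∫ y in Metric.ball x t,
              (‖fderiv ℝ g y‖ ^ 2 - ‖u‖ ^ 2 -
                ‖fderiv ℝ (fun z => g z - (⟪u, z⟫ + b)) y‖ ^ 2)| ≤
            C * ε * (volume (Metric.ball x t)).toReal :=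
  flatten_area_comparison_general n

end
end

section
/- Let n≥1 and let η:ℝ^n→[0,∞) be a C^∞ function with support contained in the closed unit ball and ∫_{ℝ^n}η dL^n = 1; for ε>0 set η_ε(x)=ε^{−n}η(x/ε) and, for g defined on a ball, g^ε(x)=∫_{B(x,ε)}η_ε(x−y)g(y) dL^n(y). Then there exists C>0 (depending only on n and η) such that: for every ball B=B(x,t)⊂ℝ^n, every 0<ε<1/2, and every C^1 function g:B→ℝ with ‖∇g‖≤1 and |g|≤ε²t on B, one has ∫_{B(x,t−εt)} ‖∇(g^{εt})‖² dL^n ≤ C·ε²·L^n(B). -/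
/-!
On `B(x, t - δ)` with `δ = εt`, the mollification `g^δ` coincides with the convolution of the
zero extension of `g` with `η_δ`, so `∇g^δ = g * ∇η_δ` there. Hence
`|∇g^δ| ≤ sup |g| · ‖∇η_δ‖₁ = ε²t · δ⁻¹ ‖∇η‖₁ = ε ‖∇η‖₁`, and integrating the square over
`B(x, t - δ) ⊆ B` gives the bound with `C = (‖∇η‖₁ + 1)²`.
-/

open Set Metric MeasureTheory Module
open scoped Convolution

noncomputable section

namespace Mollifier

variable {E : Type*} [NormedAddCommGroup E] [NormedSpace ℝ E]

def rescale (η : E → ℝ) (δ : ℝ) (z : E) : ℝ := (δ ^ finrank ℝ E)⁻¹ * η (δ⁻¹ • z)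

variable {η : E → ℝ} {δ : ℝ}

theorem rescale_eq_zero_of_le_norm (hη : Continuous η) (hηs : η.support ⊆ closedBall 0 1)
    (hδ : 0 < δ) {z : E} (hz : δ ≤ ‖z‖) : rescale η δ z = 0 := by
  -- the support is open, so it lies in the interior `ball 0 1` of the closed ball
  have hball : η.support ⊆ ball 0 1 := by
    simpa [interior_closedBall (0 : E) one_ne_zero] using
      interior_maximal hηs hη.isOpen_support
  by_contra h
  have hlt : ‖δ⁻¹ • z‖ < 1 := mem_ball_zero_iff.1 (hball (right_ne_zero_of_mul h))
  rw [norm_smul, Real.norm_eq_abs, abs_of_pos (inv_pos.2 hδ), inv_mul_lt_iff₀ hδ] at hlt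
  linarith

theorem contDiff_rescale {k : WithTop ℕ∞} (hη : ContDiff ℝ k η) : ContDiff ℝ k (rescale η δ) :=
  contDiff_const.mul (hη.comp (contDiff_const_smul δ⁻¹))

theorem hasCompactSupport_rescale [FiniteDimensional ℝ E] (hη : Continuous η)
    (hηs : η.support ⊆ closedBall 0 1) (hδ : 0 < δ) : HasCompactSupport (rescale η δ) :=
  HasCompactSupport.intro (isCompact_closedBall 0 δ) fun _ hz =>
    rescale_eq_zero_of_le_norm hη hηs hδ (not_le.1 (mem_closedBall_zero_iff.not.1 hz)).le

theorem fderiv_rescale (hη : Differentiable ℝ η) (u : E) :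
    fderiv ℝ (rescale η δ) u = ((δ ^ finrank ℝ E)⁻¹ * δ⁻¹) • fderiv ℝ η (δ⁻¹ • u) := by
  have hscale : HasFDerivAt (fun z : E => δ⁻¹ • z) (δ⁻¹ • ContinuousLinearMap.id ℝ E) u :=
    (hasFDerivAt_id u).const_smul δ⁻¹
  have := (((hη _).hasFDerivAt.comp u hscale).const_mul (δ ^ finrank ℝ E)⁻¹).fderiv
  refine this.trans ?_
  rw [ContinuousLinearMap.comp_smul, ContinuousLinearMap.comp_id, smul_smul]

variable [MeasurableSpace E] [BorelSpace E] (μ : Measure E)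

def mollify (η : E → ℝ) (δ : ℝ) (g : E → ℝ) (z : E) : ℝ :=
  ∫ w in ball z δ, rescale η δ (z - w) * g w ∂μ

theorem mollify_eq_convolution_indicator (hη : Continuous η)
    (hηs : η.support ⊆ closedBall 0 1) (hδ : 0 < δ) {g : E → ℝ} {s : Set E} {z : E}
    (hz : ball z δ ⊆ s) :
    mollify μ η δ g z = (s.indicator g ⋆[ContinuousLinearMap.lsmul ℝ ℝ, μ] rescale η δ) z := by
  rw [convolution_def, ← setIntegral_eq_integral_of_forall_compl_eq_zero (s := ball z δ)]
  · refine setIntegral_congr_fun measurableSet_ball fun w hw => ?_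
    simp [indicator_of_mem (hz hw), mul_comm]
  · intro w hw
    rw [mem_ball, not_lt, dist_comm, dist_eq_norm] at hw
    simp [rescale_eq_zero_of_le_norm hη hηs hδ hw]

variable [FiniteDimensional ℝ E] [μ.IsAddHaarMeasure]

theorem integral_norm_fderiv_rescale (hη : Differentiable ℝ η) (hδ : 0 < δ) :
    ∫ u, ‖fderiv ℝ (rescale η δ) u‖ ∂μ = δ⁻¹ * ∫ u, ‖fderiv ℝ η u‖ ∂μ := by
  simp_rw [fderiv_rescale hη, norm_smul, Real.norm_eq_abs, abs_of_pos (by positivity :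
    0 < (δ ^ finrank ℝ E)⁻¹ * δ⁻¹)]
  rw [integral_const_mul, Measure.integral_comp_inv_smul_of_nonneg μ (‖fderiv ℝ η ·‖) hδ.le,
    smul_eq_mul]
  field_simp

theorem norm_fderiv_convolution_le {f φ : E → ℝ} {M : ℝ} (hf : LocallyIntegrable f μ)
    (hfM : ∀ w, ‖f w‖ ≤ M) (hφ : ContDiff ℝ 1 φ) (hφc : HasCompactSupport φ) (y : E) :
    ‖fderiv ℝ (f ⋆[ContinuousLinearMap.lsmul ℝ ℝ, μ] φ) y‖ ≤ M * ∫ u, ‖fderiv ℝ φ u‖ ∂μ := by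
  have hDφ : Integrable (fun u => ‖fderiv ℝ φ u‖) μ :=
    ((hφ.continuous_fderiv one_ne_zero).integrable_of_hasCompactSupport (hφc.fderiv ℝ)).norm
  rw [(hφc.hasFDerivAt_convolution_right _ hf hφ y).fderiv, convolution_def]
  calc _ ≤ ∫ w, M * ‖fderiv ℝ φ (y - w)‖ ∂μ := by
        refine norm_integral_le_of_norm_le ((hDφ.comp_sub_left y).const_mul M)
          (.of_forall fun w => ?_)
        have : (ContinuousLinearMap.lsmul ℝ ℝ).precompR E (f w) (fderiv ℝ φ (y - w)) =
            f w • fderiv ℝ φ (y - w) := by ext; simp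
        rw [this, norm_smul]
        exact mul_le_mul_of_nonneg_right (hfM w) (norm_nonneg _)
    _ = M * ∫ u, ‖fderiv ℝ φ u‖ ∂μ := by
        rw [integral_const_mul, integral_sub_left_eq_self (‖fderiv ℝ φ ·‖) μ y]

theorem norm_fderiv_mollify_le (hη : ContDiff ℝ 1 η) (hηs : η.support ⊆ closedBall 0 1)
    (hδ : 0 < δ) {g : E → ℝ} {x : E} {t M : ℝ}
    (hg : AEStronglyMeasurable g (μ.restrict (ball x t)))
    (hgM : ∀ y ∈ ball x t, |g y| ≤ M) {y : E} (hy : y ∈ ball x (t - δ)) :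
    ‖fderiv ℝ (mollify μ η δ g) y‖ ≤ M / δ * ∫ u, ‖fderiv ℝ η u‖ ∂μ := by
  have hM : 0 ≤ M := (abs_nonneg _).trans (hgM y (ball_subset_ball (by linarith) hy))
  have hint : Integrable ((ball x t).indicator g) μ :=
    IntegrableOn.integrable_indicator ⟨hg, .restrict_of_bounded M measure_ball_lt_top
      (ae_restrict_of_forall_mem measurableSet_ball hgM)⟩ measurableSet_ball
  have hbound : ∀ w, ‖(ball x t).indicator g w‖ ≤ M := fun w => by
    by_cases hw : w ∈ ball x t <;> simp [hw, hgM, hM]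
  have heq : mollify μ η δ g =ᶠ[nhds y]
      ((ball x t).indicator g ⋆[ContinuousLinearMap.lsmul ℝ ℝ, μ] rescale η δ) := by
    filter_upwards [isOpen_ball.mem_nhds hy] with z hz
    exact mollify_eq_convolution_indicator μ hη.continuous hηs hδ
      (ball_subset_ball' (by rw [mem_ball] at hz; linarith))
  rw [heq.fderiv_eq, div_eq_mul_inv, mul_assoc,
    ← integral_norm_fderiv_rescale μ (hη.differentiable one_ne_zero) hδ]
  exact norm_fderiv_convolution_le μ hint.locallyIntegrable hbound (contDiff_rescale hη)
    (hasCompactSupport_rescale hη.continuous hηs hδ) y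

theorem setIntegral_sq_norm_fderiv_mollify_le (hη : ContDiff ℝ 1 η)
    (hηs : η.support ⊆ closedBall 0 1) (hδ : 0 < δ) {g : E → ℝ} {x : E} {t M : ℝ}
    (hg : AEStronglyMeasurable g (μ.restrict (ball x t))) (hgM : ∀ y ∈ ball x t, |g y| ≤ M) :
    ∫ y in ball x (t - δ), ‖fderiv ℝ (mollify μ η δ g) y‖ ^ 2 ∂μ ≤
      (M / δ * ∫ u, ‖fderiv ℝ η u‖ ∂μ) ^ 2 * μ.real (ball x t) := calc
  _ ≤ ‖∫ y in ball x (t - δ), ‖fderiv ℝ (mollify μ η δ g) y‖ ^ 2 ∂μ‖ := Real.le_norm_self _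
  _ ≤ (M / δ * ∫ u, ‖fderiv ℝ η u‖ ∂μ) ^ 2 * μ.real (ball x (t - δ)) :=
    norm_setIntegral_le_of_norm_le_const measure_ball_lt_top fun y hy => by
      rw [norm_pow, norm_norm]
      exact pow_le_pow_left₀ (norm_nonneg _) (norm_fderiv_mollify_le μ hη hηs hδ hg hgM hy) 2
  _ ≤ (M / δ * ∫ u, ‖fderiv ℝ η u‖ ∂μ) ^ 2 * μ.real (ball x t) := by
    gcongr
    · exact measure_ball_lt_top.ne
    · linarith

end Mollifier

theorem mollified_gradient_small_general (n : ℕ) (η : Euc n → ℝ)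
    (hη : ContDiff ℝ (⊤ : ℕ∞) η)
    (hηs : Function.support η ⊆ Metric.closedBall 0 1) :
    ∃ C : ℝ, 0 < C ∧ ∀ (x : Euc n) (t ε : ℝ), 0 < t → 0 < ε → ε < 1 / 2 →
      ∀ g : Euc n → ℝ, ContDiffOn ℝ 1 g (Metric.ball x t) →
        (∀ y ∈ Metric.ball x t, ‖fderiv ℝ g y‖ ≤ 1) →
        (∀ y ∈ Metric.ball x t, |g y| ≤ ε ^ 2 * t) →
        (∫ y in Metric.ball x (t - ε * t),
            ‖fderiv ℝ (fun z => ∫ w in Metric.ball z (ε * t),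
                ((ε * t) ^ n)⁻¹ * η ((ε * t)⁻¹ • (z - w)) * g w) y‖ ^ 2) ≤
          C * ε ^ 2 * (volume (Metric.ball x t)).toReal := by
  set K := ∫ u, ‖fderiv ℝ η u‖
  have hK : 0 ≤ K := integral_nonneg fun _ => norm_nonneg _
  refine ⟨(K + 1) ^ 2, by positivity, fun x t ε ht hε _ g hg _ hgM => ?_⟩
  have hmollify : (fun z : Euc n => ∫ w in ball z (ε * t),
      ((ε * t) ^ n)⁻¹ * η ((ε * t)⁻¹ • (z - w)) * g w) = Mollifier.mollify volume η (ε * t) g := by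
    funext z
    simp only [Mollifier.mollify, Mollifier.rescale, finrank_euclideanSpace_fin]
  rw [hmollify]
  calc _ ≤ (ε ^ 2 * t / (ε * t) * K) ^ 2 * volume.real (ball x t) :=
        Mollifier.setIntegral_sq_norm_fderiv_mollify_le volume
          (hη.of_le (by exact_mod_cast le_top)) hηs (by positivity)
          (hg.continuousOn.aestronglyMeasurable measurableSet_ball) hgM
    _ ≤ (K + 1) ^ 2 * ε ^ 2 * volume.real (ball x t) := by
        rw [show ε ^ 2 * t / (ε * t) = ε by field_simp, mul_pow, mul_comm (ε ^ 2)]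
        gcongr
        linarith

/-- There is `C > 0` (depending only on `n` and the mollifier `η`) such
that: if `g` is `C^1` on `B = B(x, t)` with `|∇g| ≤ 1` and `|g| ≤ ε² t`, `0 < ε < 1/2`, then
the mollification at scale `ε t` satisfies `∫_{B(x, t − εt)} |∇(g^{εt})|² ≤ C ε² L^n(B)`. -/
theorem mollified_gradient_small (n : ℕ) (hn : 1 ≤ n) (η : Euc n → ℝ)
    (hη : ContDiff ℝ (⊤ : ℕ∞) η) (hη0 : ∀ x, 0 ≤ η x)
    (hηs : Function.support η ⊆ Metric.closedBall 0 1) (hη1 : ∫ x, η x = 1) :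
    ∃ C : ℝ, 0 < C ∧ ∀ (x : Euc n) (t ε : ℝ), 0 < t → 0 < ε → ε < 1 / 2 →
      ∀ g : Euc n → ℝ, ContDiffOn ℝ 1 g (Metric.ball x t) →
        (∀ y ∈ Metric.ball x t, ‖fderiv ℝ g y‖ ≤ 1) →
        (∀ y ∈ Metric.ball x t, |g y| ≤ ε ^ 2 * t) →
        (∫ y in Metric.ball x (t - ε * t),
            ‖fderiv ℝ (fun z => ∫ w in Metric.ball z (ε * t),
                ((ε * t) ^ n)⁻¹ * η ((ε * t)⁻¹ • (z - w)) * g w) y‖ ^ 2) ≤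
          C * ε ^ 2 * (volume (Metric.ball x t)).toReal :=
  mollified_gradient_small_general n η hη hηs

end
end

section
/- Let X be a real normed space, m≥1, and let T:X→ℝ^m be a continuous (bounded) linear surjection. If P⊂ℝ^m is directionally porous, then T^{−1}(P) is directionally porous in X. -/
/-! A continuous linear surjection `T` onto a finite-dimensional space has a continuous linear
right inverse `S`. Lifting a porosity direction `v` of `P` at `T x` to `S v` gives a direction
for `T⁻¹' P` at `x`: as `T` maps `x + t • S v` to `T x + t • v` and is `‖T‖`-Lipschitz, a small
enough ball around `x + t • S v` is mapped into the hole of `P` around `T x + t • v`. The porosity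
constant only degrades by the factor `(‖T‖ + 1) (‖S‖ + 1)`. -/

open Set Metric MeasureTheory

noncomputable section

open scoped NNReal

theorem LipschitzWith.ball_inter_preimage_eq_empty {α β : Type*} [PseudoMetricSpace α]
    [PseudoMetricSpace β] {f : α → β} {K : ℝ≥0} (hf : LipschitzWith K f) (hK : K ≠ 0)
    {P : Set β} {z : α} {r : ℝ}
    (h : ball (f z) (K * r) ∩ P = ∅) : ball z r ∩ f ⁻¹' P = ∅ :=
  eq_empty_of_subset_empty fun _ ⟨hy, hyP⟩ => h.subset ⟨hf.mapsTo_ball hK z r hy, hyP⟩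

section DirPorous

variable {E F : Type*} [NormedAddCommGroup E] [NormedSpace ℝ E]
  [NormedAddCommGroup F] [NormedSpace ℝ F]

theorem dirPorous_of_forall_exists_ne_zero {P : Set E} {ρ : ℝ} (hρ0 : 0 < ρ) (hρ1 : ρ < 1)
    (h : ∀ x ∈ P, ∃ w : E, w ≠ 0 ∧ ∀ δ : ℝ, 0 < δ →
      ∃ t : ℝ, t ≠ 0 ∧ |t| < δ ∧ ball (x + t • w) (ρ * ‖t • w‖) ∩ P = ∅) :
    DirPorous P := by
  refine ⟨ρ, hρ0, hρ1, fun x hx => ?_⟩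
  obtain ⟨w, hw0, hholes⟩ := h x hx
  have hw : 0 < ‖w‖ := norm_pos_iff.mpr hw0
  refine ⟨‖w‖⁻¹ • w, by simp [norm_smul, hw.ne'], fun δ hδ => ?_⟩
  obtain ⟨t, ht0, htδ, hhole⟩ := hholes (δ / ‖w‖) (div_pos hδ hw)
  have hsmul : (t * ‖w‖) • ‖w‖⁻¹ • w = t • w := by
    rw [smul_smul, mul_assoc, mul_inv_cancel₀ hw.ne', mul_one]
  have hnorm : |t * ‖w‖| = ‖t • w‖ := by rw [norm_smul, Real.norm_eq_abs, abs_mul, abs_norm]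
  refine ⟨t * ‖w‖, mul_ne_zero ht0 hw.ne', ?_, ?_⟩
  · rwa [abs_mul, abs_norm, ← lt_div_iff₀ hw]
  · rwa [hsmul, hnorm]

theorem DirPorous.preimage_of_comp_eq_id {P : Set F} (hP : DirPorous P) (T : E →L[ℝ] F)
    (S : F →L[ℝ] E) (hTS : T.comp S = ContinuousLinearMap.id ℝ F) : DirPorous (T ⁻¹' P) := by
  obtain ⟨ρ, hρ0, hρ1, hP⟩ := hP
  set L : ℝ≥0 := ‖T‖₊ + 1
  set M : ℝ := ‖S‖ + 1
  have hL : (1 : ℝ) ≤ L := by simp [L]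
  have hM : 1 ≤ M := by simp [M]
  have hLM : 1 ≤ (L : ℝ) * M := one_le_mul_of_one_le_of_one_le hL hM
  refine dirPorous_of_forall_exists_ne_zero (ρ := ρ / (L * M)) (by positivity)
    ((div_le_self hρ0.le hLM).trans_lt hρ1) fun x hx => ?_
  obtain ⟨v, hv, hholes⟩ := hP (T x) hx
  have hTSv : T (S v) = v := DFunLike.congr_fun hTS v
  refine ⟨S v, fun h0 => ?_, fun δ hδ => ?_⟩
  · rw [h0, map_zero] at hTSv
    simp [← hTSv] at hv
  obtain ⟨t, ht0, htδ, hhole⟩ := hholes δ hδ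
  refine ⟨t, ht0, htδ, ?_⟩
  have hlip : LipschitzWith L T := T.lipschitz.weaken le_self_add
  refine hlip.ball_inter_preimage_eq_empty (by simp [L]) (eq_empty_of_subset_empty ?_)
  rw [map_add, map_smul, hTSv, ← hhole]
  refine inter_subset_inter_left _ (ball_subset_ball ?_)
  have hSv : ‖S v‖ ≤ M := (S.unit_le_opNorm v hv.le).trans (le_add_of_nonneg_right zero_le_one)
  calc (L : ℝ) * (ρ / (L * M) * ‖t • S v‖) = ρ * |t| * (‖S v‖ / M) := by
        rw [norm_smul, Real.norm_eq_abs]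
        field_simp
    _ ≤ ρ * |t| := mul_le_of_le_one_right (by positivity) ((div_le_one (by positivity)).mpr hSv)

end DirPorous

theorem dirPorous_preimage_of_continuousLinearSurjection_general
    (X : Type*) [NormedAddCommGroup X] [NormedSpace ℝ X] (m : ℕ)
    (T : X →L[ℝ] Euc m) (hT : Function.Surjective T)
    (P : Set (Euc m)) (hP : DirPorous P) :
    DirPorous (T ⁻¹' P) := by
  obtain ⟨S, hS⟩ := T.exists_rightInverse_of_surjective (LinearMap.range_eq_top.mpr hT)
  exact hP.preimage_of_comp_eq_id T S hS

/-- The preimage of a directionally porous subset of `ℝ^m` under a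
continuous linear surjection is directionally porous. -/
theorem dirPorous_preimage_of_continuousLinearSurjection
    (X : Type*) [NormedAddCommGroup X] [NormedSpace ℝ X] (m : ℕ) (hm : 1 ≤ m)
    (T : X →L[ℝ] Euc m) (hT : Function.Surjective T)
    (P : Set (Euc m)) (hP : DirPorous P) :
    DirPorous (T ⁻¹' P) :=
  dirPorous_preimage_of_continuousLinearSurjection_general X m T hT P hP

end
end
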